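/- Let g be a finite-dimensional Lie algebra over a field k of characteristic p > 0 that is w-restricted (for every x ∈ g there is y ∈ g with (ad x)^p = ad y). Let b be a subalgebra of g containing an ideal a such that the image of b in g/a is a Cartan subalgebra of g/a and b is the full preimage of that Cartan subalgebra. Then b is w-restricted: for every x ∈ b there exists y ∈ b with (ad_b x)^p = ad_b y. -/
import Mathlib


/-- The projection `g → g ⧸ a` onto the quotient by a Lie ideal, as a morphism of
Lie algebras. -/
def lieQuotientMk (k' g : Type) [Field k'] [LieRing g] [LieAlgebra k' g]
    (a : LieIdeal k' g) : g →ₗ⁅k'⁆ g ⧸ a :=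
  { (LieSubmodule.Quotient.mk' a).toLinearMap with
    map_lie' := by
      intro x y
      exact LieSubmodule.Quotient.mk_bracket (R := k') (I := a) x y }

/-- let `g` be a finite-dimensional Lie algebra over a field `k` of
characteristic `p > 0` which is w-restricted (every `(ad x)^p` is inner).  Let
`a ⊆ g` be an ideal and `b` the full preimage in `g` of a Cartan subalgebra `b̄`
of `g ⧸ a`.  Then `b` is w-restricted: for every `x ∈ b` there is `y ∈ b` with
`(ad_b x)^p = ad_b y`. -/
theorem stmt5 (k g : Type) [Field k] (p : ℕ) [Fact p.Prime] [CharP k p]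
    [LieRing g] [LieAlgebra k g] [FiniteDimensional k g]
    (hwg : ∀ x : g, ∃ y : g, (LieAlgebra.ad k g x) ^ p = LieAlgebra.ad k g y)
    (a : LieIdeal k g)
    (bbar : LieSubalgebra k (g ⧸ a)) (hbbar : bbar.IsCartanSubalgebra)
    (b : LieSubalgebra k g)
    (hb : b = LieSubalgebra.comap (lieQuotientMk k g a) bbar) :
    ∀ x : b, ∃ y : b, (LieAlgebra.ad k b x) ^ p = LieAlgebra.ad k b y := by
  intro x
  obtain ⟨y, hy⟩ := hwg (x : g)
  set π := lieQuotientMk k g a with hπ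
  have hadpow : ∀ (n : ℕ) (z : b),
      (((LieAlgebra.ad k b x ^ n) z : b) : g) = (LieAlgebra.ad k g (x : g) ^ n) (z : g) := by
    intro n
    induction n with
    | zero => intro z; simp
    | succ n ih =>
      intro z
      rw [pow_succ', pow_succ']
      simp only [Module.End.mul_apply, LieAlgebra.ad_apply]
      rw [← ih z]
      rfl
  have hyb : y ∈ b := by
    rw [hb]
    show π y ∈ bbar
    rw [← hbbar.self_normalizing]
    rw [LieSubalgebra.mem_normalizer_iff]
    intro z hz
    obtain ⟨w, rfl⟩ := LieSubmodule.Quotient.surjective_mk' a z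
    have hw : w ∈ b := by rw [hb]; exact hz
    have key : ⁅y, w⁆ = (LieAlgebra.ad k g (x : g) ^ p) w := by
      rw [hy]; rfl
    have hmem : (LieAlgebra.ad k g (x : g) ^ p) w ∈ b := by
      rw [← hadpow p ⟨w, hw⟩]
      exact ((LieAlgebra.ad k b x ^ p) ⟨w, hw⟩).2
    show ⁅π y, π w⁆ ∈ bbar
    have : ⁅π y, π w⁆ = π ⁅y, w⁆ := (π.map_lie y w).symm
    rw [this, key]
    exact hb ▸ hmem
  refine ⟨⟨y, hyb⟩, ?_⟩
  ext z
  show ((LieAlgebra.ad k b x ^ p) z : g) = _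
  rw [hadpow p z, hy]
  rfl
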